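/- Let x, y, z, t be words with x ≠ ε and z ≠ ε. If for all i ≥ 0 the word x^i y z^i is a prefix of t^ω (the infinite iteration of t), then there exist words α₁, α₂ such that x ∈ (α₁α₂)*, z ∈ (α₂α₁)*, and x y z ∈ α₁(α₂α₁)*. -/
import Mathlib


def wpow {α : Type*} (u : List α) : ℕ → List α
  | 0 => []
  | k + 1 => u ++ wpow u k

/-- `w` is a (finite) prefix of the right-infinite word `t^ω`. -/
def PrefOmega {α : Type*} (w t : List α) : Prop := ∃ k, w <+: wpow t k

namespace StmtAux

variable {α : Type*}

lemma wpow_length (u : List α) (k : ℕ) : (wpow u k).length = k * u.length := by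
  induction k with
  | zero => simp [wpow]
  | succ k ih => simp [wpow, ih]; ring

lemma wpow_add (u : List α) (a b : ℕ) : wpow u (a + b) = wpow u a ++ wpow u b := by
  induction a with
  | zero => simp [wpow]
  | succ a ih => simp [Nat.succ_add, wpow, ih]

lemma wpow_nil (k : ℕ) : wpow ([] : List α) k = [] := by
  induction k with
  | zero => rfl
  | succ k ih => simp [wpow, ih]

lemma wpow_getD (u : List α) (d0 : α) : ∀ (k n : ℕ), n < k * u.length →
    (wpow u k).getD n d0 = u.getD (n % u.length) d0 := by
  intro k
  induction k with
  | zero => intro n hn; simp at hn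
  | succ k ih =>
    intro n hn
    have hu : 0 < u.length := by
      rcases Nat.eq_zero_or_pos u.length with h | h
      · rw [h] at hn; simp at hn
      · exact h
    show (u ++ wpow u k).getD n d0 = _
    rcases lt_or_ge n u.length with h | h
    · rw [Nat.mod_eq_of_lt h]
      rw [List.getD_eq_getElem _ _ (by simp [wpow_length, Nat.succ_mul]; omega),
        List.getElem_append_left h, List.getD_eq_getElem _ _ h]
    · have hs : (k + 1) * u.length = k * u.length + u.length := by ring
      have h1 : n - u.length < k * u.length := by omega
      have h2 : n < (u ++ wpow u k).length := by
        simp only [List.length_append, wpow_length]; omega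
      rw [List.getD_eq_getElem _ _ h2, List.getElem_append_right h,
        ← List.getD_eq_getElem (wpow u k) d0 (by rw [wpow_length]; exact h1),
        ih _ h1]
      congr 1
      conv_rhs => rw [← Nat.sub_add_cancel h]
      rw [Nat.add_mod_right]

lemma eq_wpow_of (v u : List α) (d0 : α) (k : ℕ) (hlen : u.length = k * v.length)
    (hag : ∀ n, n < u.length → u.getD n d0 = v.getD (n % v.length) d0) :
    u = wpow v k := by
  apply List.ext_getElem (by rw [wpow_length, hlen])
  intro n h1 h2
  have h3 : n < k * v.length := by rwa [hlen] at h1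
  rw [← List.getD_eq_getElem u d0 h1, ← List.getD_eq_getElem _ d0 h2, hag n h1,
    wpow_getD v d0 k n h3]

lemma wpow_shift (a₁ a₂ : List α) (k : ℕ) :
    wpow (a₁ ++ a₂) k ++ a₁ = a₁ ++ wpow (a₂ ++ a₁) k := by
  induction k with
  | zero => simp [wpow]
  | succ k ih => simp only [wpow, List.append_assoc] at ih ⊢; rw [ih]


lemma getD_append_left' (a b : List α) (d0 : α) (j : ℕ) (h : j < a.length) :
    (a ++ b).getD j d0 = a.getD j d0 := by
  rw [List.getD_eq_getElem _ _ (by simp; omega), List.getElem_append_left h,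
    List.getD_eq_getElem _ _ h]

lemma getD_append_right' (a b : List α) (d0 : α) (j : ℕ) (h : a.length ≤ j)
    (h2 : j < a.length + b.length) :
    (a ++ b).getD j d0 = b.getD (j - a.length) d0 := by
  rw [List.getD_eq_getElem _ _ (by simp; omega), List.getElem_append_right h,
    List.getD_eq_getElem _ _ (by omega)]

lemma getD_take' (l : List α) (d0 : α) (i j : ℕ) (h : j < i) (h2 : j < l.length) :
    (l.take i).getD j d0 = l.getD j d0 := by
  rw [List.getD_eq_getElem _ _ (by simp [List.length_take]; omega), List.getElem_take,
    List.getD_eq_getElem _ _ h2]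

lemma getD_drop' (l : List α) (d0 : α) (i j : ℕ) (h : i + j < l.length) :
    (l.drop i).getD j d0 = l.getD (i + j) d0 := by
  rw [List.getD_eq_getElem _ _ (by simp [List.length_drop]; omega), List.getElem_drop,
    List.getD_eq_getElem _ _ h]

end StmtAux

open StmtAux in
/-- If `x ≠ ε`, `z ≠ ε` and `x^i y z^i` is a prefix of `t^ω` for every `i ≥ 0`,
then there are `α₁, α₂` with `x ∈ (α₁α₂)*`, `z ∈ (α₂α₁)*` and `xyz ∈ α₁(α₂α₁)*`. -/
theorem stmt3 {α : Type*} (x y z t : List α) (hx : x ≠ []) (hz : z ≠ [])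
    (h : ∀ i : ℕ, PrefOmega (wpow x i ++ y ++ wpow z i) t) :
    ∃ a₁ a₂ : List α,
      (∃ k, x = wpow (a₁ ++ a₂) k) ∧
      (∃ k, z = wpow (a₂ ++ a₁) k) ∧
      (∃ k, x ++ y ++ z = a₁ ++ wpow (a₂ ++ a₁) k) := by
  have hx0 : 0 < x.length := List.length_pos_iff.mpr hx
  have hz0 : 0 < z.length := List.length_pos_iff.mpr hz
  have ht : t ≠ [] := by
    intro h0
    obtain ⟨k, hk⟩ := h 1
    rw [h0, wpow_nil, List.prefix_nil] at hk
    simp [wpow] at hk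
    exact hx hk.1
  have hL : 0 < t.length := List.length_pos_iff.mpr ht
  set d0 : α := x.head hx with hd0def
  set f : ℕ → α := fun n => t.getD (n % t.length) d0 with hfdef
  -- prefixes of t^ω read off f
  have hpref : ∀ w : List α, PrefOmega w t → ∀ n, n < w.length → w.getD n d0 = f n := by
    rintro w ⟨k, hk⟩ n hn
    have hn' : n < (wpow t k).length := lt_of_lt_of_le hn hk.length_le
    have hn'' : n < k * t.length := by rwa [wpow_length] at hn'
    rw [List.getD_eq_getElem _ _ hn, hk.getElem hn, ← List.getD_eq_getElem _ d0 hn',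
      wpow_getD t d0 k n hn'']
  -- f is given by x everywhere
  have hfx : ∀ n, f n = x.getD (n % x.length) d0 := by
    intro n
    obtain ⟨k, hk⟩ := h (n + 1)
    have hp : wpow x (n + 1) <+: wpow x (n + 1) ++ y ++ wpow z (n + 1) := by
      rw [List.append_assoc]; exact List.prefix_append _ _
    have hn : n < (wpow x (n + 1)).length := by
      rw [wpow_length]
      calc n < n + 1 := Nat.lt_succ_self n
        _ ≤ (n + 1) * x.length := Nat.le_mul_of_pos_right _ hx0
    have := hpref _ ⟨k, hp.trans hk⟩ n hn
    rw [← this, wpow_getD x d0 (n + 1) n (by rwa [wpow_length] at hn)]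
  have hperx : ∀ m, f (m + x.length) = f m := by
    intro m; rw [hfx, hfx, Nat.add_mod_right]
  -- adding multiples of a period
  have hmul : ∀ k : ℕ, (∀ m, f (m + k) = f m) → ∀ (j m : ℕ), f (m + j * k) = f m := by
    intro k hk j
    induction j with
    | zero => simp
    | succ j ih =>
      intro m
      have e : m + (j + 1) * k = (m + j * k) + k := by ring
      rw [e, hk, ih]
  -- f shifted by |y| is given by z
  have hfz : ∀ n, f (y.length + n) = z.getD (n % z.length) d0 := by
    intro n
    obtain ⟨k, hk⟩ := h (n + 1)
    set w := wpow x (n + 1) ++ y ++ wpow z (n + 1) with hwdef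
    have hlw : w.length = (n + 1) * x.length + y.length + (n + 1) * z.length := by
      simp [hwdef, wpow_length]; omega
    set q := (n + 1) * x.length + y.length + n with hqdef
    have hn' : n < (wpow z (n + 1)).length := by
      rw [wpow_length]
      calc n < n + 1 := Nat.lt_succ_self n
        _ ≤ (n + 1) * z.length := Nat.le_mul_of_pos_right _ hz0
    have hqw : q < w.length := by
      rw [hlw]; rw [wpow_length] at hn'; omega
    have e1 : w.getD q d0 = (wpow z (n + 1)).getD n d0 := by
      have hql : (wpow x (n + 1) ++ y).length ≤ q := by
        simp [wpow_length, hqdef]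
      have hq2 : q < ((wpow x (n + 1) ++ y) ++ wpow z (n + 1)).length := hqw
      rw [List.getD_eq_getElem _ _ hqw]
      show ((wpow x (n + 1) ++ y) ++ wpow z (n + 1))[q]'hq2 = _
      rw [List.getElem_append_right hql, ← List.getD_eq_getElem _ d0 (by
        simp only [List.length_append, wpow_length, hqdef]
        rw [wpow_length] at hn'; omega)]
      congr 1
      simp [wpow_length, hqdef]
    have e2 : (wpow z (n + 1)).getD n d0 = z.getD (n % z.length) d0 :=
      wpow_getD z d0 (n + 1) n (by rwa [wpow_length] at hn')
    have e3 : w.getD q d0 = f q := hpref w ⟨k, hk⟩ q hqw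
    have e4 : f q = f (y.length + n) := by
      have e : q = (y.length + n) + (n + 1) * x.length := by rw [hqdef]; ring
      rw [e, hmul x.length hperx]
    rw [← e4, ← e3, e1, e2]
  -- f restricted to positions < |y| is y
  have hfy : ∀ n, n < y.length → y.getD n d0 = f n := by
    intro n hn
    have h0 := h 0
    have e : wpow x 0 ++ y ++ wpow z 0 = y := by simp [wpow]
    rw [e] at h0
    exact hpref y h0 n hn
  -- period |z|
  have hperz : ∀ m, f (m + z.length) = f m := by
    intro m
    set M := m + y.length * x.length with hMdef
    have hM : y.length ≤ M := by
      have : y.length * 1 ≤ y.length * x.length := Nat.mul_le_mul_left _ hx0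
      omega
    have e1 : f (m + z.length) = f (M + z.length) := by
      have e : M + z.length = (m + z.length) + y.length * x.length := by rw [hMdef]; ring
      rw [e, hmul x.length hperx]
    have e2 : f (M + z.length) = z.getD ((M - y.length + z.length) % z.length) d0 := by
      rw [← hfz (M - y.length + z.length)]; congr 1; omega
    have e3 : f M = z.getD ((M - y.length) % z.length) d0 := by
      rw [← hfz (M - y.length)]; congr 1; omega
    have e4 : f M = f m := by
      rw [hMdef, hmul x.length hperx]
    rw [e1, e2, Nat.add_mod_right, ← e3, e4]
  -- gcd period
  have hgcd : ∀ a b : ℕ, (∀ m, f (m + a) = f m) → (∀ m, f (m + b) = f m) →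
      ∀ m, f (m + Nat.gcd a b) = f m := by
    intro a b
    induction a, b using Nat.gcd.induction with
    | H0 n => intro _ hb m; rw [Nat.gcd_zero_left]; exact hb m
    | H1 a b ha ih =>
      intro hA hB m
      rw [Nat.gcd_rec]
      refine ih ?_ hA m
      intro m'
      have e : m' + b = (m' + b % a) + (b / a) * a := by
        have := Nat.mod_add_div' b a; omega
      calc f (m' + b % a) = f ((m' + b % a) + (b / a) * a) := (hmul a hA _ _).symm
        _ = f (m' + b) := by rw [← e]
        _ = f m' := hB m'
  set d := Nat.gcd x.length z.length with hddef
  have hd0 : 0 < d := Nat.gcd_pos_of_pos_left _ hx0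
  have hdx : d ∣ x.length := Nat.gcd_dvd_left _ _
  have hdz : d ∣ z.length := Nat.gcd_dvd_right _ _
  have hper : ∀ m, f (m + d) = f m := hgcd _ _ hperx hperz
  have hmodeq : ∀ a b : ℕ, a % d = b % d → f a = f b := by
    have key : ∀ c, f c = f (c % d) := by
      intro c
      calc f c = f (c % d + c / d * d) := by rw [Nat.mod_add_div']
        _ = f (c % d) := hmul d hper _ _
    intro a b hab
    rw [key a, key b, hab]
  set r := y.length % d with hrdef
  have hrd : r < d := Nat.mod_lt _ hd0
  set p := x.take d with hpdef
  have hpd : p.length = d := by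
    rw [hpdef, List.length_take]
    exact min_eq_left (Nat.le_of_dvd hx0 hdx)
  have hp : ∀ j, j < d → p.getD j d0 = f j := by
    intro j hj
    have hj' : j < x.length := lt_of_lt_of_le hj (Nat.le_of_dvd hx0 hdx)
    rw [hpdef, getD_take' x d0 d j hj hj', hfx j, Nat.mod_eq_of_lt hj']
  set a₁ := p.take r with ha1def
  set a₂ := p.drop r with ha2def
  have ha1len : a₁.length = r := by
    rw [ha1def, List.length_take, hpd]; exact min_eq_left (le_of_lt hrd)
  have ha2len : a₂.length = d - r := by rw [ha2def, List.length_drop, hpd]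
  have hpa : a₁ ++ a₂ = p := List.take_append_drop _ _
  set q := a₂ ++ a₁ with hqdef
  have hqlen : q.length = d := by
    rw [hqdef, List.length_append, ha1len, ha2len]; omega
  have hq : ∀ j, j < d → q.getD j d0 = f (r + j) := by
    intro j hj
    rcases lt_or_ge j (d - r) with hc | hc
    · rw [hqdef, getD_append_left' _ _ _ _ (by rw [ha2len]; omega), ha2def,
        getD_drop' p d0 r j (by rw [hpd]; omega), hp (r + j) (by omega)]
    · rw [hqdef, getD_append_right' _ _ _ _ (by rw [ha2len]; omega)
          (by rw [ha1len, ha2len]; omega), ha2len, ha1def,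
        getD_take' p d0 r _ (by omega) (by rw [hpd]; omega), hp (j - (d - r)) (by omega)]
      apply hmodeq
      have e : (j - (d - r)) + d = r + j := by omega
      calc (j - (d - r)) % d = ((j - (d - r)) + d) % d := (Nat.add_mod_right _ _).symm
        _ = (r + j) % d := by rw [e]
  -- x = p^(|x|/d)
  have hX : x = wpow p (x.length / d) := by
    apply eq_wpow_of p x d0
    · rw [hpd, Nat.div_mul_cancel hdx]
    · intro n hn
      rw [hpd]
      have h1 : x.getD n d0 = f n := by
        rw [hfx n, Nat.mod_eq_of_lt hn]
      have h2 : p.getD (n % d) d0 = f (n % d) := hp _ (Nat.mod_lt _ hd0)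
      rw [h1, h2]
      exact hmodeq _ _ (by simp)
  -- z = q^(|z|/d)
  have hZ : z = wpow q (z.length / d) := by
    apply eq_wpow_of q z d0
    · rw [hqlen, Nat.div_mul_cancel hdz]
    · intro n hn
      rw [hqlen]
      have h1 : z.getD n d0 = f (y.length + n) := by
        rw [hfz n, Nat.mod_eq_of_lt hn]
      have h2 : q.getD (n % d) d0 = f (r + n % d) := hq _ (Nat.mod_lt _ hd0)
      rw [h1, h2]
      apply hmodeq
      rw [hrdef]
      exact Nat.add_mod _ _ _
  -- y = p^(|y|/d) ++ a₁
  have hY : y = wpow p (y.length / d) ++ a₁ := by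
    have hylen : y.length = y.length / d * d + r := by
      rw [hrdef]; exact (Nat.div_add_mod' y.length d).symm
    have hwl : (wpow p (y.length / d)).length = y.length / d * d := by
      rw [wpow_length, hpd]
    apply List.ext_getElem (by rw [List.length_append, hwl, ha1len]; omega)
    intro n h1 h2
    rw [← List.getD_eq_getElem y d0 h1, ← List.getD_eq_getElem _ d0 h2, hfy n h1]
    rcases lt_or_ge n (y.length / d * d) with hc | hc
    · rw [getD_append_left' _ _ _ _ (by rw [hwl]; exact hc),
        wpow_getD p d0 _ n (by rw [hpd]; exact hc), hpd, hp _ (Nat.mod_lt _ hd0)]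
      exact hmodeq _ _ (by simp)
    · rw [getD_append_right' _ _ _ _ (by rw [hwl]; exact hc) (by rw [hwl, ha1len]; omega),
        hwl, ha1def, getD_take' p d0 r _ (by omega) (by rw [hpd]; omega),
        hp (n - y.length / d * d) (by omega)]
      apply hmodeq
      have e : n = (n - y.length / d * d) + (y.length / d) * d := by omega
      conv_lhs => rw [e]
      exact Nat.add_mul_mod_self_right _ _ _
  -- assemble
  refine ⟨a₁, a₂, ⟨x.length / d, by rwa [hpa]⟩, ⟨z.length / d, by rwa [← hqdef]⟩,
    ⟨x.length / d + y.length / d + z.length / d, ?_⟩⟩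
  conv_lhs => rw [hX, hY, hZ]
  have e1 : wpow p (x.length / d) ++ (wpow p (y.length / d) ++ a₁) =
      wpow p (x.length / d + y.length / d) ++ a₁ := by
    rw [wpow_add, List.append_assoc]
  have e2 : wpow p (x.length / d + y.length / d) ++ a₁ =
      a₁ ++ wpow (a₂ ++ a₁) (x.length / d + y.length / d) := by
    rw [← hpa]; exact wpow_shift a₁ a₂ _
  rw [e1, e2, ← hqdef, List.append_assoc, ← wpow_add]
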